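/- Let n ≥ 2 and let s₁, …, s_{n−1} ∈ S_n be the adjacent transpositions s_i = (i, i+1). For any permutation π of {1, …, n−1}, the product s_{π(1)} s_{π(2)} ⋯ s_{π(n−1)} is an n-cycle; in particular its Coxeter length (number of inversions) equals n − 1, so the expression is reduced. -/

import Mathlib

open Equiv

/-- The Coxeter length of a permutation of `Fin m`: its number of inversions. -/
def invLength {m : ℕ} (w : Perm (Fin m)) : ℕ :=
  (Finset.univ.filter (fun p : Fin m × Fin m => p.1 < p.2 ∧ w p.2 < w p.1)).card

/-!
Induct on the number of letters. The largest letter `s_k` occurs as `P s_k Q`, where the letters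
of `P` and `Q` are smaller, so `Q` fixes `k + 1` and `P s_k Q = (P Q) * swap (Q⁻¹ k) (k + 1)`.
By induction `P Q` is a cycle on `{0, …, k}`, and multiplying a cycle on the right by a
transposition of a point of its support with a fixed point splices the fixed point into the cycle.
The same transposition swaps two positions `b < k + 1` whose values are in increasing order,
which creates an inversion and destroys none; so each step adds at least one inversion, while a
word of `n` adjacent transpositions has at most `n` inversions.
-/

open Finset

namespace Equiv.Perm

variable {α : Type*} {f g : Perm α}

theorem SameCycle.of_forall_sameCycle_apply (h : ∀ z, g.SameCycle z (f z)) {x y : α}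
    (hxy : f.SameCycle x y) : g.SameCycle x y := by
  obtain ⟨i, rfl⟩ := hxy
  induction i using Int.induction_on with
  | zero => exact SameCycle.refl g x
  | succ i ih =>
    rw [add_comm, zpow_one_add, mul_apply]
    exact ih.trans (h _)
  | pred i ih =>
    have hstep := h ((f ^ (-(i : ℤ) - 1)) x)
    rw [← mul_apply, ← zpow_one_add, add_sub_cancel] at hstep
    exact ih.trans hstep.symm

variable [DecidableEq α] {b c : α}

theorem mul_swap_apply_of_ne_of_ne {x : α} (hb : x ≠ b) (hc : x ≠ c) :
    (f * swap b c) x = f x := by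
  rw [mul_apply, swap_apply_of_ne_of_ne hb hc]

theorem IsCycle.mul_swap_of_apply_eq_self (hf : f.IsCycle) (hb : f b ≠ b) (hc : f c = c) :
    (f * swap b c).IsCycle := by
  have hbc : b ≠ c := by rintro rfl; exact hb hc
  have hfb : f b ≠ c := fun h => hbc (f.injective (h.trans hc.symm))
  have hsame : ∀ z, (f * swap b c).SameCycle z (f z) := by
    intro z
    by_cases hzb : z = b
    · subst hzb
      exact ⟨2, by simp [pow_two, hc]⟩
    by_cases hzc : z = c
    · rw [hzc, hc]
    · exact ⟨1, by simp [mul_swap_apply_of_ne_of_ne hzb hzc]⟩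
  refine ⟨c, by simpa [hc] using hfb, fun y hy => ?_⟩
  by_cases hyc : y = c
  · rw [hyc]
  have hfy : f y ≠ y := by
    by_cases hyb : y = b
    · rwa [hyb]
    · rwa [mul_swap_apply_of_ne_of_ne hyb hyc] at hy
  have hc_fb : (f * swap b c).SameCycle c (f b) := ⟨1, by simp⟩
  exact hc_fb.trans ((hf.sameCycle (by simpa using hb) hfy).of_forall_sameCycle_apply hsame)

theorem support_mul_swap_of_apply_eq_self [Fintype α] (hb : f b ≠ b) (hc : f c = c) :
    (f * swap b c).support = insert c f.support := by
  have hbc : b ≠ c := by rintro rfl; exact hb hc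
  have hfb : f b ≠ c := fun h => hbc (f.injective (h.trans hc.symm))
  ext y
  rw [mem_insert, mem_support, mem_support]
  by_cases hyb : y = b
  · subst hyb
    simp [hb, hc, hbc, hbc.symm]
  by_cases hyc : y = c
  · subst hyc
    simp [hfb]
  · simp [mul_swap_apply_of_ne_of_ne hyb hyc, hyc]

end Equiv.Perm

section Inversions

variable {m : ℕ}

def inversions (w : Perm (Fin m)) : Finset (Fin m × Fin m) :=
  univ.filter fun p => p.1 < p.2 ∧ w p.2 < w p.1

@[simp]
theorem mem_inversions {w : Perm (Fin m)} {p : Fin m × Fin m} :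
    p ∈ inversions w ↔ p.1 < p.2 ∧ w p.2 < w p.1 := by
  simp [inversions]

theorem invLength_eq_card_inversions (w : Perm (Fin m)) : invLength w = #(inversions w) := rfl

theorem invLength_one : invLength (1 : Perm (Fin m)) = 0 := by
  rw [invLength_eq_card_inversions, card_eq_zero, eq_empty_iff_forall_notMem]
  rintro ⟨p, q⟩ h
  simp only [mem_inversions, Perm.one_apply] at h
  exact lt_asymm h.1 h.2

theorem invLength_lt_invLength_mul_swap {w : Perm (Fin m)} {b d : Fin m} (hbd : b < d)
    (hw : w b < w d) : invLength w < invLength (w * swap b d) := by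
  let f : Fin m × Fin m → Fin m × Fin m := fun p =>
    if swap b d p.1 < swap b d p.2 then (swap b d p.1, swap b d p.2) else p
  -- `swap b d` carries an inversion of `w` to one of `w * swap b d` unless it reverses the pair;
  -- it does so only for the pairs `(b, x)` and `(x, d)` with `b < x < d`, which stay inversions
  -- because `w b < w d`.
  have hmaps : Set.MapsTo f (inversions w) ((inversions (w * swap b d)).erase (b, d)) := by
    rintro ⟨p, q⟩ h
    simp only [coe_erase, Set.mem_sdiff, mem_coe, mem_inversions, Set.mem_singleton_iff,
      Perm.mul_apply, f] at h ⊢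
    simp only [swap_apply_def] at *
    split_ifs at * <;> grind
  have hinj : Set.InjOn f (inversions w) := by
    rintro ⟨p, q⟩ hpq ⟨p', q'⟩ hpq' heq
    simp only [mem_coe, mem_inversions, f] at hpq hpq' heq
    split_ifs at heq <;> grind [swap_apply_self]
  have hbd_mem : (b, d) ∈ inversions (w * swap b d) := by simpa using ⟨hbd, hw⟩
  rw [invLength_eq_card_inversions, invLength_eq_card_inversions]
  calc #(inversions w) ≤ #((inversions (w * swap b d)).erase (b, d)) :=
        card_le_card_of_injOn f hmaps hinj
    _ < #(inversions (w * swap b d)) := card_erase_lt_of_mem hbd_mem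

end Inversions

section AdjacentTranspositions

variable {n : ℕ}

def adjSwap (i : Fin n) : Perm (Fin (n + 1)) := swap i.castSucc i.succ

def EnumeratesBelow (k : ℕ) (l : List (Fin n)) : Prop :=
  l.Nodup ∧ ∀ i, i ∈ l ↔ (i : ℕ) < k

theorem prod_map_adjSwap_apply_of_lt {k : ℕ} {l : List (Fin n)} (hl : ∀ i ∈ l, (i : ℕ) < k)
    {x : Fin (n + 1)} (hx : k < x) : (l.map adjSwap).prod x = x := by
  induction l with
  | nil => rfl
  | cons i t ih =>
    have hi := hl i List.mem_cons_self
    rw [List.map_cons, List.prod_cons, Perm.mul_apply,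
      ih fun j hj => hl j (List.mem_cons_of_mem i hj), adjSwap]
    exact swap_apply_of_ne_of_ne (by simp [Fin.ext_iff]; omega) (by simp [Fin.ext_iff]; omega)

theorem EnumeratesBelow.exists_prod_eq_mul_swap {k : ℕ} (hk : k < n) {l : List (Fin n)}
    (hl : EnumeratesBelow (k + 1) l) :
    ∃ (l' : List (Fin n)) (b : Fin (n + 1)), EnumeratesBelow k l' ∧ (b : ℕ) ≤ k ∧
      (l.map adjSwap).prod = (l'.map adjSwap).prod * swap b (Fin.succ ⟨k, hk⟩) := by
  set m : Fin n := ⟨k, hk⟩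
  obtain ⟨l₁, l₂, rfl⟩ := List.append_of_mem ((hl.2 m).2 k.lt_succ_self)
  obtain ⟨hm, hnodup⟩ := List.nodup_cons.1 (List.nodup_middle.1 hl.1)
  have hl' : EnumeratesBelow k (l₁ ++ l₂) := by
    refine ⟨hnodup, fun i => ?_⟩
    have hi := (List.perm_middle.mem_iff.trans List.mem_cons).symm.trans (hl.2 i)
    by_cases him : i = m
    · subst him
      simpa [hm] using hi
    · have hik : (i : ℕ) ≠ k := fun h => him (Fin.ext h)
      exact ((or_iff_right him).symm.trans hi).trans (by omega)
  set Q := (l₂.map adjSwap).prod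
  have hQ : ∀ x : Fin (n + 1), k < x → Q x = x :=
    fun x => prod_map_adjSwap_apply_of_lt fun i hi => (hl'.2 i).1 (List.mem_append_right l₁ hi)
  refine ⟨l₁ ++ l₂, Q⁻¹ m.castSucc, hl', ?_, ?_⟩
  · by_contra! h
    have := (hQ _ h).symm.trans (Perm.eq_inv_iff_eq.1 rfl)
    rw [this] at h
    simp [m] at h
  · rw [List.map_append, List.map_cons, List.prod_append, List.prod_cons, adjSwap,
      swap_mul_eq_mul_swap, Perm.inv_eq_iff_eq.2 (hQ m.succ (by simp [m])).symm,
      List.map_append, List.prod_append, mul_assoc]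

theorem EnumeratesBelow.isCycle_prod {k : ℕ} (hk : 1 ≤ k) (hkn : k ≤ n) {l : List (Fin n)}
    (hl : EnumeratesBelow k l) :
    (l.map adjSwap).prod.IsCycle ∧
      (l.map adjSwap).prod.support = univ.filter fun x : Fin (n + 1) => (x : ℕ) ≤ k := by
  induction k, hk using Nat.le_induction generalizing l with
  | base =>
    obtain ⟨l', b, hl', hb, heq⟩ := hl.exists_prod_eq_mul_swap hkn
    have hnil : l' = [] :=
      List.eq_nil_iff_forall_not_mem.2 fun i hi => by simpa using (hl'.2 i).1 hi
    have hbc : b ≠ Fin.succ ⟨0, hkn⟩ := by simp [Fin.ext_iff]; omega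
    rw [heq, hnil, List.map_nil, List.prod_nil, one_mul]
    refine ⟨Perm.isCycle_swap hbc, ?_⟩
    rw [Perm.support_swap hbc]
    ext x
    simp [Fin.ext_iff]
    omega
  | succ k _ ih =>
    obtain ⟨l', b, hl', hb, heq⟩ := hl.exists_prod_eq_mul_swap hkn
    obtain ⟨hcycle, hsupport⟩ := ih (by omega) hl'
    have hvb : (l'.map adjSwap).prod b ≠ b := by
      rw [← Perm.mem_support, hsupport]
      simpa using hb
    have hvc : (l'.map adjSwap).prod (Fin.succ ⟨k, by omega⟩) = Fin.succ ⟨k, by omega⟩ := by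
      rw [← Perm.notMem_support, hsupport]
      simp
    rw [heq, Perm.support_mul_swap_of_apply_eq_self hvb hvc, hsupport]
    refine ⟨hcycle.mul_swap_of_apply_eq_self hvb hvc, ?_⟩
    ext x
    simp [Fin.ext_iff]
    omega

theorem eq_castSucc_and_eq_succ_of_adjSwap_lt {i : Fin n} {x y : Fin (n + 1)} (hxy : x < y)
    (h : adjSwap i y < adjSwap i x) : x = i.castSucc ∧ y = i.succ := by
  rw [Fin.lt_def] at hxy h
  simp only [adjSwap, swap_apply_def] at h
  split_ifs at h <;> simp only [Fin.ext_iff, Fin.val_castSucc, Fin.val_succ] at * <;> omega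

theorem invLength_adjSwap_mul_le (i : Fin n) (w : Perm (Fin (n + 1))) :
    invLength (adjSwap i * w) ≤ invLength w + 1 := by
  have hsub :
      inversions (adjSwap i * w) ⊆ insert (w⁻¹ i.castSucc, w⁻¹ i.succ) (inversions w) := by
    rintro ⟨p, q⟩ h
    rw [mem_inversions, Perm.mul_apply, Perm.mul_apply] at h
    rw [mem_insert, mem_inversions, Prod.mk.injEq, Perm.eq_inv_iff_eq, Perm.eq_inv_iff_eq]
    rcases lt_or_gt_of_ne (w.injective.ne h.1.ne') with hlt | hgt
    · exact Or.inr ⟨h.1, hlt⟩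
    · exact Or.inl (eq_castSucc_and_eq_succ_of_adjSwap_lt hgt h.2)
  rw [invLength_eq_card_inversions, invLength_eq_card_inversions]
  exact (card_le_card hsub).trans (card_insert_le _ _)

theorem invLength_prod_map_adjSwap_le (l : List (Fin n)) :
    invLength (l.map adjSwap).prod ≤ l.length := by
  induction l with
  | nil => simp [invLength_one]
  | cons i t ih =>
    rw [List.map_cons, List.prod_cons, List.length_cons]
    exact (invLength_adjSwap_mul_le i _).trans (Nat.add_le_add_right ih 1)

theorem EnumeratesBelow.le_invLength_prod {k : ℕ} (hkn : k ≤ n) {l : List (Fin n)}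
    (hl : EnumeratesBelow k l) : k ≤ invLength (l.map adjSwap).prod := by
  induction k generalizing l with
  | zero => exact Nat.zero_le _
  | succ k ih =>
    obtain ⟨l', b, hl', hb, heq⟩ := hl.exists_prod_eq_mul_swap hkn
    set v := (l'.map adjSwap).prod
    have hfix : ∀ x : Fin (n + 1), k < x → v x = x :=
      fun x => prod_map_adjSwap_apply_of_lt fun i hi => (hl'.2 i).1 hi
    have hvb : (v b : ℕ) ≤ k := by
      by_contra! h
      have := v.injective (hfix _ h)
      omega
    have hvc := hfix (Fin.succ ⟨k, hkn⟩) (by simp)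
    rw [heq]
    calc k + 1 ≤ invLength v + 1 := Nat.add_le_add_right (ih (by omega) hl') 1
      _ ≤ invLength (v * swap b (Fin.succ ⟨k, hkn⟩)) :=
        invLength_lt_invLength_mul_swap (by simp [Fin.lt_def]; omega)
          (by rw [hvc, Fin.lt_def]; simp; omega)

end AdjacentTranspositions

/-- In `S_{n+1}` (with `n ≥ 1`), the product of all `n` adjacent transpositions
`s_i = (i, i+1)`, each occurring exactly once, in any order given by a permutation `π`
of the index set, is an `(n+1)`-cycle; in particular its Coxeter length (number of
inversions) equals `n`, so the expression is reduced. -/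
theorem coxeter_element_isCycle (n : ℕ) (hn : 1 ≤ n) (π : Perm (Fin n)) :
    ((List.ofFn fun i : Fin n =>
        Equiv.swap ((π i).castSucc) ((π i).succ)).prod : Perm (Fin (n + 1))).IsCycle ∧
      ((List.ofFn fun i : Fin n =>
        Equiv.swap ((π i).castSucc) ((π i).succ)).prod : Perm (Fin (n + 1))).support =
        Finset.univ ∧
      invLength ((List.ofFn fun i : Fin n =>
        Equiv.swap ((π i).castSucc) ((π i).succ)).prod : Perm (Fin (n + 1))) = n := by
  have hπ : EnumeratesBelow n (List.ofFn π) :=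
    ⟨List.nodup_ofFn.2 π.injective, fun i => by simp [List.mem_ofFn, π.surjective i]⟩
  have hword :
      (List.ofFn fun i => swap (π i).castSucc (π i).succ) = (List.ofFn π).map adjSwap := by
    rw [List.map_ofFn]
    rfl
  obtain ⟨hcycle, hsupport⟩ := hπ.isCycle_prod hn le_rfl
  rw [hword]
  refine ⟨hcycle, ?_, le_antisymm ?_ (hπ.le_invLength_prod le_rfl)⟩
  · rw [hsupport]
    ext x
    simpa using Nat.lt_succ_iff.1 x.isLt
  · simpa using invLength_prod_map_adjSwap_le (List.ofFn π)
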